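/- If E is a weight vector of the Melikian algebra M for the torus T_M with weight (φ₁, φ₂) ∈ F₅², and E is homogeneous of degree d for the Z-grading of M, then d ≡ 3(φ₁ + φ₂) mod 5. -/

import Mathlib

open scoped BigOperators

namespace Melikian

/-- Index set for monomials in the truncated polynomial algebra
`A(2) = F[x₁,x₂]/(x₁⁵,x₂⁵)`. -/
abbrev Idx : Type := Fin 5 × Fin 5

/-- The truncated polynomial algebra `A(2)`, as functions on monomial exponents. -/
abbrev A (F : Type*) [Field F] : Type _ := Idx → F

variable {F : Type*} [Field F]

/-- The monomial `x^b = x₁^{b₁} x₂^{b₂}`. -/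
def X (b : Idx) : A F := fun a => if a = b then 1 else 0

/-- Truncated multiplication of `A(2)`. -/
def mulA (f g : A F) : A F := fun a =>
  ∑ b : Idx, ∑ c : Idx,
    if b.1.val + c.1.val = a.1.val ∧ b.2.val + c.2.val = a.2.val then f b * g c else 0

/-- Partial derivative `∂/∂x₁` on `A(2)`. -/
def d1 (f : A F) : A F := fun a =>
  if h : a.1.val + 1 < 5 then ((a.1.val + 1 : ℕ) : F) * f (⟨a.1.val + 1, h⟩, a.2) else 0

/-- Partial derivative `∂/∂x₂` on `A(2)`. -/
def d2 (f : A F) : A F := fun a =>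
  if h : a.2.val + 1 < 5 then ((a.2.val + 1 : ℕ) : F) * f (a.1, ⟨a.2.val + 1, h⟩) else 0

/-- The Witt–Jacobson algebra `W(2)` as a free `A(2)`-module with basis `D₁, D₂`:
an element `(f₁, f₂)` stands for `f₁D₁ + f₂D₂`. -/
abbrev W (F : Type*) [Field F] : Type _ := A F × A F

/-- Action of a derivation `D = f₁D₁+f₂D₂ ∈ W(2)` on `A(2)`. -/
def Dw (D : W F) (g : A F) : A F := mulA D.1 (d1 g) + mulA D.2 (d2 g)

/-- Divergence `div(f₁D₁+f₂D₂) = D₁(f₁) + D₂(f₂)`. -/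
def divW (D : W F) : A F := d1 D.1 + d2 D.2

/-- The usual bracket of `W(2)`. -/
def brW (D E : W F) : W F := (Dw D E.1 - Dw E D.1, Dw D E.2 - Dw E D.2)

/-- Multiplication of an element of `W(2)` by a truncated polynomial. -/
def smulA (f : A F) (D : W F) : W F := (mulA f D.1, mulA f D.2)

/-- The Melikian algebra `M = A(2) ⊕ W(2) ⊕ W(2)~` as an `F`-vector space. -/
abbrev Mel (F : Type*) [Field F] : Type _ := A F × W F × W F

/-- Inclusion of `A(2)` into `M`. -/
def ιA (f : A F) : Mel F := (f, 0, 0)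

/-- Inclusion of `W(2)` into `M`. -/
def ιW (D : W F) : Mel F := (0, D, 0)

/-- Inclusion of the second copy `W(2)~` into `M`, `D ↦ D̃`. -/
def ιT (D : W F) : Mel F := (0, 0, D)

/-- The Melikian bracket on `M = A(2) ⊕ W(2) ⊕ W(2)~`, defined by the rules
`[D,Ẽ] = [D,E]~ + 2 div(D) Ẽ`, `[D,f] = D(f) − 2 div(D) f`,
`[f₁D̃₁+f₂D̃₂, g₁D̃₁+g₂D̃₂] = f₁g₂ − f₂g₁`, `[f,Ẽ] = fE`,
`[f,g] = 2(gD₂(f) − fD₂(g))D̃₁ + 2(fD₁(g) − gD₁(f))D̃₂`,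
extended bilinearly and antisymmetrically (with the standard bracket on `W(2)`). -/
def brM (u v : Mel F) : Mel F :=
  ( (Dw u.2.1 v.1 - (2 : F) • mulA (divW u.2.1) v.1)
      - (Dw v.2.1 u.1 - (2 : F) • mulA (divW v.2.1) u.1)
      + (mulA u.2.2.1 v.2.2.2 - mulA u.2.2.2 v.2.2.1)
  , brW u.2.1 v.2.1 + smulA u.1 v.2.2 - smulA v.1 u.2.2
  , (brW u.2.1 v.2.2 + (2 : F) • smulA (divW u.2.1) v.2.2)
      - (brW v.2.1 u.2.2 + (2 : F) • smulA (divW v.2.1) u.2.2)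
      + ((2 : F) • (mulA v.1 (d2 u.1) - mulA u.1 (d2 v.1)),
         (2 : F) • (mulA u.1 (d1 v.1) - mulA v.1 (d1 u.1))) )

/-- `x^b D_i` as an element of `W(2)` (`i = 0` stands for `D₁`, `i = 1` for `D₂`). -/
def wOf (i : Fin 2) (b : Idx) : W F := if i = 0 then (X b, 0) else (0, X b)

/-- The element `x₁D₁ ∈ M`. -/
def x1D1 : Mel F := ιW (X (1, 0), 0)

/-- The element `x₂D₂ ∈ M`. -/
def x2D2 : Mel F := ιW (0, X (0, 1))

/-- The element `1 ∈ A(2) ⊂ M`. -/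
def oneM : Mel F := ιA (X (0, 0))

/-- The element `D_{i+1} ∈ W(2) ⊂ M`. -/
def DD (i : Fin 2) : Mel F := ιW (wOf i (0, 0))

/-- The element `D̃_{i+1} ∈ W(2)~ ⊂ M`. -/
def TT (i : Fin 2) : Mel F := ιT (wOf i (0, 0))

/-- Total degree of a monomial exponent. -/
def degA (b : Idx) : ℤ := (b.1.val : ℤ) + (b.2.val : ℤ)

/-- The degree-`d` piece `M_d` of the `ℤ`-grading of the Melikian algebra:
`deg_M(f) = 3 deg(f) − 2` on `A(2)`, `deg_M(x^bD_i) = 3(|b|−1)` on `W(2)`, and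
`deg_M(x^bD̃_i) = 3(|b|−1)+2` on `W(2)~`. -/
def Md (d : ℤ) : Submodule F (Mel F) :=
  Submodule.span F
    ( {m | ∃ b : Idx, m = ιA (X b) ∧ d = 3 * degA b - 2}
      ∪ {m | ∃ b : Idx, ∃ i : Fin 2, m = ιW (wOf i b) ∧ d = 3 * (degA b - 1)}
      ∪ {m | ∃ b : Idx, ∃ i : Fin 2, m = ιT (wOf i b) ∧ d = 3 * (degA b - 1) + 2} )

/-- The part `M_{≥ d}` of the Melikian algebra. -/
def Mge (d : ℤ) : Submodule F (Mel F) := ⨆ e : ℤ, ⨆ _ : d ≤ e, (Md e : Submodule F (Mel F))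

/-- The squaring `Sq(γ)(x,y) = Σ_{k=1}^{4} [γ^k(x), γ^{5−k}(y)] / (k!(5−k)!)`
of an operator `γ` on the Melikian algebra (characteristic 5). -/
def melSq (γ : Mel F → Mel F) (x y : Mel F) : Mel F :=
  ∑ k ∈ Finset.Icc 1 4,
    ((Nat.factorial k * Nat.factorial (5 - k) : ℕ) : F)⁻¹ • brM (γ^[k] x) (γ^[5 - k] y)

/-- The Chevalley–Eilenberg coboundary of a linear 1-cochain of `M` with values in the
adjoint representation. -/
def cob (g : Mel F →ₗ[F] Mel F) (x y : Mel F) : Mel F :=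
  brM x (g y) - brM y (g x) - g (brM x y)


/-- The canonical ring map `𝔽₅ = ℤ/5ℤ → F` for a field `F` of characteristic 5. -/
def zc (F : Type*) [Field F] [CharP F 5] : ZMod 5 →+* F := ZMod.castHom dvd_rfl F

section Helpers
variable {F : Type*} [Field F]

lemma mulA_zero_left (g : A F) : mulA 0 g = 0 := by
  funext a; simp [mulA]

lemma mulA_zero_right (f : A F) : mulA f 0 = 0 := by
  funext a; simp [mulA]

lemma d1_zero : d1 (0 : A F) = 0 := by funext a; simp [d1]
lemma d2_zero : d2 (0 : A F) = 0 := by funext a; simp [d2]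

lemma Dw_zero_right (D : W F) : Dw D 0 = 0 := by
  simp [Dw, d1_zero, d2_zero, mulA_zero_right]

lemma Dw_zero_fun (g : A F) : Dw (0 : W F) g = 0 := by
  simp [Dw, mulA_zero_left]

lemma brW_zero_right (D : W F) : brW D 0 = 0 := by
  have h1 : ((0 : W F)).1 = (0 : A F) := rfl
  have h2 : ((0 : W F)).2 = (0 : A F) := rfl
  simp [brW, h1, h2, Dw_zero_right, Dw_zero_fun]

lemma smulA_zero_left (D : W F) : smulA (0 : A F) D = 0 := by
  simp [smulA, mulA_zero_left]

lemma smulA_zero_right (f : A F) : smulA f (0 : W F) = 0 := by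
  have h1 : ((0 : W F)).1 = (0 : A F) := rfl
  simp [smulA, h1, mulA_zero_right]

lemma mulA_comm (f g : A F) : mulA f g = mulA g f := by
  funext a
  unfold mulA
  rw [Finset.sum_comm]
  apply Finset.sum_congr rfl; intro c _
  apply Finset.sum_congr rfl; intro b _
  rw [mul_comm, Nat.add_comm b.1.val, Nat.add_comm b.2.val]

lemma mulA_X_apply (p : Idx) (g : A F) (a : Idx) :
    mulA (X p) g a
      = ∑ c : Idx, if p.1.val + c.1.val = a.1.val ∧ p.2.val + c.2.val = a.2.val
          then g c else 0 := by
  unfold mulA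
  rw [Finset.sum_eq_single p]
  · simp [X]
  · intro b _ hb
    apply Finset.sum_eq_zero; intro c _
    simp [X, hb]
  · simp

lemma mulA_X00_left (g : A F) : mulA (X (0,0)) g = g := by
  funext a
  rw [mulA_X_apply]
  rw [Finset.sum_eq_single a]
  · simp
  · intro c _ hc
    rw [if_neg]
    rintro ⟨h1, h2⟩
    simp only [Fin.isValue, Fin.val_zero, Nat.zero_add] at h1 h2
    exact hc (Prod.ext (Fin.ext h1) (Fin.ext h2))
  · simp

lemma mulA_X00_right (f : A F) : mulA f (X (0,0)) = f := by
  rw [mulA_comm, mulA_X00_left]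

end Helpers
section Helpers2
variable {F : Type*} [Field F]

lemma d1_X10 : d1 (X (1,0) : A F) = X (0,0) := by
  funext a
  rcases a with ⟨⟨a1, h1⟩, ⟨a2, h2⟩⟩
  simp only [d1, X, Prod.mk.injEq, Fin.ext_iff, Fin.val_one, Fin.val_zero]
  interval_cases a1 <;> interval_cases a2 <;> norm_num

lemma d2_X10 : d2 (X (1,0) : A F) = 0 := by
  funext a
  rcases a with ⟨⟨a1, h1⟩, ⟨a2, h2⟩⟩
  simp only [d2, X, Prod.mk.injEq, Fin.ext_iff, Fin.val_one, Fin.val_zero]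
  interval_cases a1 <;> interval_cases a2 <;> norm_num

lemma d1_X01 : d1 (X (0,1) : A F) = 0 := by
  funext a
  rcases a with ⟨⟨a1, h1⟩, ⟨a2, h2⟩⟩
  simp only [d1, X, Prod.mk.injEq, Fin.ext_iff, Fin.val_one, Fin.val_zero]
  interval_cases a1 <;> interval_cases a2 <;> norm_num

lemma d2_X01 : d2 (X (0,1) : A F) = X (0,0) := by
  funext a
  rcases a with ⟨⟨a1, h1⟩, ⟨a2, h2⟩⟩
  simp only [d2, X, Prod.mk.injEq, Fin.ext_iff, Fin.val_one, Fin.val_zero]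
  interval_cases a1 <;> interval_cases a2 <;> norm_num

lemma divW_x1 : divW ((X (1,0), 0) : W F) = X (0,0) := by
  show d1 (X (1,0)) + d2 (0 : A F) = X (0,0)
  rw [d1_X10, d2_zero, add_zero]

lemma divW_x2 : divW ((0, X (0,1)) : W F) = X (0,0) := by
  show d1 (0 : A F) + d2 (X (0,1)) = X (0,0)
  rw [d2_X01, d1_zero, zero_add]

lemma Dw_apply_X10 (D : W F) : Dw D (X (1,0)) = D.1 := by
  show mulA D.1 (d1 (X (1,0))) + mulA D.2 (d2 (X (1,0))) = D.1
  rw [d1_X10, d2_X10, mulA_X00_right, mulA_zero_right, add_zero]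

lemma Dw_apply_X01 (D : W F) : Dw D (X (0,1)) = D.2 := by
  show mulA D.1 (d1 (X (0,1))) + mulA D.2 (d2 (X (0,1))) = D.2
  rw [d1_X01, d2_X01, mulA_X00_right, mulA_zero_right, zero_add]

lemma Dw_x1 (g : A F) (a : Idx) :
    Dw ((X (1,0), 0) : W F) g a = (a.1.val : F) * g a := by
  have : Dw ((X (1,0), 0) : W F) g = mulA (X (1,0)) (d1 g) + mulA (0 : A F) (d2 g) := rfl
  rw [this, Pi.add_apply, mulA_zero_left, Pi.zero_apply, add_zero, mulA_X_apply]
  rcases Nat.eq_zero_or_pos a.1.val with h | h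
  · rw [Finset.sum_eq_zero, h]
    · simp
    · intro c _
      rw [if_neg]
      rintro ⟨hc1, _⟩
      simp only [Fin.isValue, Fin.val_one] at hc1
      omega
  · rw [Finset.sum_eq_single ((⟨a.1.val - 1, by omega⟩, a.2) : Idx)]
    · rw [if_pos (by constructor <;> simp <;> omega)]
      simp only [d1]
      rw [dif_pos (by simpa using by omega)]
      have e1 : a.1.val - 1 + 1 = a.1.val := by omega
      have e2 : ((⟨a.1.val - 1, by omega⟩ : Fin 5).val + 1 : ℕ) = a.1.val := by simpa using by omega
      rw [show ((⟨(⟨a.1.val - 1, by omega⟩ : Fin 5).val + 1, by simpa using by omega⟩ : Fin 5), a.2) = a from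
        Prod.ext (Fin.ext (by simpa using by omega)) rfl]
      congr 1
      exact_mod_cast congrArg _ e2
    · intro c _ hc
      rw [if_neg]
      rintro ⟨hc1, hc2⟩
      simp only [Fin.isValue, Fin.val_one, Fin.val_zero, Nat.zero_add] at hc1 hc2
      exact hc (Prod.ext (Fin.ext (show c.1.val = a.1.val - 1 by omega)) (Fin.ext hc2))
    · simp

lemma Dw_x2 (g : A F) (a : Idx) :
    Dw ((0, X (0,1)) : W F) g a = (a.2.val : F) * g a := by
  have : Dw ((0, X (0,1)) : W F) g = mulA (0 : A F) (d1 g) + mulA (X (0,1)) (d2 g) := rfl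
  rw [this, Pi.add_apply, mulA_zero_left, Pi.zero_apply, zero_add, mulA_X_apply]
  rcases Nat.eq_zero_or_pos a.2.val with h | h
  · rw [Finset.sum_eq_zero, h]
    · simp
    · intro c _
      rw [if_neg]
      rintro ⟨_, hc2⟩
      simp only [Fin.isValue, Fin.val_one] at hc2
      omega
  · rw [Finset.sum_eq_single ((a.1, ⟨a.2.val - 1, by omega⟩) : Idx)]
    · rw [if_pos (by constructor <;> simp <;> omega)]
      simp only [d2]
      rw [dif_pos (by simpa using by omega)]
      have e2 : ((⟨a.2.val - 1, by omega⟩ : Fin 5).val + 1 : ℕ) = a.2.val := by simpa using by omega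
      rw [show (a.1, (⟨(⟨a.2.val - 1, by omega⟩ : Fin 5).val + 1, by simpa using by omega⟩ : Fin 5)) = a from
        Prod.ext rfl (Fin.ext (by simpa using by omega))]
      congr 1
      exact_mod_cast congrArg _ e2
    · intro c _ hc
      rw [if_neg]
      rintro ⟨hc1, hc2⟩
      simp only [Fin.isValue, Fin.val_one, Fin.val_zero, Nat.zero_add] at hc1 hc2
      exact hc (Prod.ext (Fin.ext hc1) (Fin.ext (show c.2.val = a.2.val - 1 by omega)))
    · simp

end Helpers2
section Components
variable {F : Type*} [Field F]

lemma brM_x1D1_1 (E : Mel F) (a : Idx) :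
    (brM x1D1 E).1 a = ((a.1.val : F) - 2) * E.1 a := by
  have h : (brM x1D1 E).1
      = (Dw ((X (1,0), 0) : W F) E.1 - (2:F) • mulA (divW ((X (1,0), 0) : W F)) E.1)
        - (Dw E.2.1 (0:A F) - (2:F) • mulA (divW E.2.1) (0:A F))
        + (mulA (0:A F) E.2.2.2 - mulA (0:A F) E.2.2.1) := rfl
  rw [h, divW_x1, mulA_X00_left, Dw_zero_right, mulA_zero_right, mulA_zero_left, mulA_zero_left]
  simp only [smul_zero, sub_zero, sub_self, add_zero, Pi.sub_apply, Pi.smul_apply, smul_eq_mul]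
  rw [Dw_x1]
  ring

lemma brM_x1D1_21 (E : Mel F) (a : Idx) :
    (brM x1D1 E).2.1.1 a = ((a.1.val : F) - 1) * E.2.1.1 a := by
  have h : (brM x1D1 E).2.1.1
      = (Dw ((X (1,0), 0) : W F) E.2.1.1 - Dw E.2.1 (X (1,0)))
        + mulA (0:A F) E.2.2.1 - mulA E.1 (0:A F) := rfl
  rw [h, Dw_apply_X10, mulA_zero_left, mulA_zero_right, add_zero, sub_zero]
  simp only [Pi.sub_apply]
  rw [Dw_x1]
  ring

lemma brM_x1D1_22 (E : Mel F) (a : Idx) :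
    (brM x1D1 E).2.1.2 a = (a.1.val : F) * E.2.1.2 a := by
  have h : (brM x1D1 E).2.1.2
      = (Dw ((X (1,0), 0) : W F) E.2.1.2 - Dw E.2.1 (0:A F))
        + mulA (0:A F) E.2.2.2 - mulA E.1 (0:A F) := rfl
  rw [h, Dw_zero_right, mulA_zero_left, mulA_zero_right, add_zero, sub_zero, sub_zero]
  rw [Dw_x1]

lemma brM_x1D1_31 (E : Mel F) (a : Idx) :
    (brM x1D1 E).2.2.1 a = ((a.1.val : F) + 1) * E.2.2.1 a := by
  have h : (brM x1D1 E).2.2.1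
      = (Dw ((X (1,0), 0) : W F) E.2.2.1 - Dw E.2.2 (X (1,0))
          + (2:F) • mulA (divW ((X (1,0), 0) : W F)) E.2.2.1)
        - (Dw E.2.1 (0:A F) - Dw (0 : W F) E.2.1.1 + (2:F) • mulA (divW E.2.1) (0:A F))
        + (2:F) • (mulA E.1 (d2 (0:A F)) - mulA (0:A F) (d2 E.1)) := rfl
  rw [h, divW_x1, mulA_X00_left, Dw_apply_X10, Dw_zero_right, Dw_zero_fun, mulA_zero_right,
    mulA_zero_left, d2_zero, mulA_zero_right]
  simp only [smul_zero, sub_zero, sub_self, add_zero, zero_add, Pi.add_apply, Pi.sub_apply,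
    Pi.smul_apply, smul_eq_mul, Pi.zero_apply]
  rw [Dw_x1]
  ring

lemma brM_x1D1_32 (E : Mel F) (a : Idx) :
    (brM x1D1 E).2.2.2 a = ((a.1.val : F) + 2) * E.2.2.2 a := by
  have h : (brM x1D1 E).2.2.2
      = (Dw ((X (1,0), 0) : W F) E.2.2.2 - Dw E.2.2 (0:A F)
          + (2:F) • mulA (divW ((X (1,0), 0) : W F)) E.2.2.2)
        - (Dw E.2.1 (0:A F) - Dw (0 : W F) E.2.1.2 + (2:F) • mulA (divW E.2.1) (0:A F))
        + (2:F) • (mulA (0:A F) (d1 E.1) - mulA E.1 (d1 (0:A F))) := rfl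
  rw [h, divW_x1, mulA_X00_left, Dw_zero_right, Dw_zero_right, Dw_zero_fun, mulA_zero_right,
    mulA_zero_left, d1_zero, mulA_zero_right]
  simp only [smul_zero, sub_zero, sub_self, add_zero, zero_add, Pi.add_apply, Pi.sub_apply,
    Pi.smul_apply, smul_eq_mul, Pi.zero_apply]
  rw [Dw_x1]
  ring

lemma brM_x2D2_1 (E : Mel F) (a : Idx) :
    (brM x2D2 E).1 a = ((a.2.val : F) - 2) * E.1 a := by
  have h : (brM x2D2 E).1
      = (Dw ((0, X (0,1)) : W F) E.1 - (2:F) • mulA (divW ((0, X (0,1)) : W F)) E.1)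
        - (Dw E.2.1 (0:A F) - (2:F) • mulA (divW E.2.1) (0:A F))
        + (mulA (0:A F) E.2.2.2 - mulA (0:A F) E.2.2.1) := rfl
  rw [h, divW_x2, mulA_X00_left, Dw_zero_right, mulA_zero_right, mulA_zero_left, mulA_zero_left]
  simp only [smul_zero, sub_zero, sub_self, add_zero, Pi.sub_apply, Pi.smul_apply, smul_eq_mul]
  rw [Dw_x2]
  ring

lemma brM_x2D2_21 (E : Mel F) (a : Idx) :
    (brM x2D2 E).2.1.1 a = (a.2.val : F) * E.2.1.1 a := by
  have h : (brM x2D2 E).2.1.1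
      = (Dw ((0, X (0,1)) : W F) E.2.1.1 - Dw E.2.1 (0:A F))
        + mulA (0:A F) E.2.2.1 - mulA E.1 (0:A F) := rfl
  rw [h, Dw_zero_right, mulA_zero_left, mulA_zero_right, add_zero, sub_zero, sub_zero]
  rw [Dw_x2]

lemma brM_x2D2_22 (E : Mel F) (a : Idx) :
    (brM x2D2 E).2.1.2 a = ((a.2.val : F) - 1) * E.2.1.2 a := by
  have h : (brM x2D2 E).2.1.2
      = (Dw ((0, X (0,1)) : W F) E.2.1.2 - Dw E.2.1 (X (0,1)))
        + mulA (0:A F) E.2.2.2 - mulA E.1 (0:A F) := rfl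
  rw [h, Dw_apply_X01, mulA_zero_left, mulA_zero_right, add_zero, sub_zero]
  simp only [Pi.sub_apply]
  rw [Dw_x2]
  ring

lemma brM_x2D2_31 (E : Mel F) (a : Idx) :
    (brM x2D2 E).2.2.1 a = ((a.2.val : F) + 2) * E.2.2.1 a := by
  have h : (brM x2D2 E).2.2.1
      = (Dw ((0, X (0,1)) : W F) E.2.2.1 - Dw E.2.2 (0:A F)
          + (2:F) • mulA (divW ((0, X (0,1)) : W F)) E.2.2.1)
        - (Dw E.2.1 (0:A F) - Dw (0 : W F) E.2.1.1 + (2:F) • mulA (divW E.2.1) (0:A F))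
        + (2:F) • (mulA E.1 (d2 (0:A F)) - mulA (0:A F) (d2 E.1)) := rfl
  rw [h, divW_x2, mulA_X00_left, Dw_zero_right, Dw_zero_right, Dw_zero_fun, mulA_zero_right,
    mulA_zero_left, d2_zero, mulA_zero_right]
  simp only [smul_zero, sub_zero, sub_self, add_zero, zero_add, Pi.add_apply, Pi.sub_apply,
    Pi.smul_apply, smul_eq_mul, Pi.zero_apply]
  rw [Dw_x2]
  ring

lemma brM_x2D2_32 (E : Mel F) (a : Idx) :
    (brM x2D2 E).2.2.2 a = ((a.2.val : F) + 1) * E.2.2.2 a := by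
  have h : (brM x2D2 E).2.2.2
      = (Dw ((0, X (0,1)) : W F) E.2.2.2 - Dw E.2.2 (X (0,1))
          + (2:F) • mulA (divW ((0, X (0,1)) : W F)) E.2.2.2)
        - (Dw E.2.1 (0:A F) - Dw (0 : W F) E.2.1.2 + (2:F) • mulA (divW E.2.1) (0:A F))
        + (2:F) • (mulA (0:A F) (d1 E.1) - mulA E.1 (d1 (0:A F))) := rfl
  rw [h, divW_x2, mulA_X00_left, Dw_apply_X01, Dw_zero_right, Dw_zero_fun, mulA_zero_right,
    mulA_zero_left, d1_zero, mulA_zero_right]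
  simp only [smul_zero, sub_zero, sub_self, add_zero, zero_add, Pi.add_apply, Pi.sub_apply,
    Pi.smul_apply, smul_eq_mul, Pi.zero_apply]
  rw [Dw_x2]
  ring

end Components
section Support
variable {F : Type*} [Field F]

/-- Submodule of elements supported in degree `d`. -/
def suppSub (d : ℤ) : Submodule F (Mel F) where
  carrier := {E | (∀ a : Idx, E.1 a ≠ 0 → d = 3 * degA a - 2)
    ∧ (∀ a : Idx, E.2.1.1 a ≠ 0 ∨ E.2.1.2 a ≠ 0 → d = 3 * (degA a - 1))
    ∧ (∀ a : Idx, E.2.2.1 a ≠ 0 ∨ E.2.2.2 a ≠ 0 → d = 3 * (degA a - 1) + 2)}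
  zero_mem' := by
    refine ⟨fun a ha => absurd rfl ha, fun a ha => ?_, fun a ha => ?_⟩ <;>
      rcases ha with ha | ha <;> exact absurd rfl ha
  add_mem' := by
    rintro x y ⟨hx1, hx2, hx3⟩ ⟨hy1, hy2, hy3⟩
    refine ⟨fun a ha => ?_, fun a ha => ?_, fun a ha => ?_⟩
    · by_contra hd
      have h1 : x.1 a = 0 := by by_contra h; exact hd (hx1 a h)
      have h2 : y.1 a = 0 := by by_contra h; exact hd (hy1 a h)
      exact ha (show x.1 a + y.1 a = 0 by rw [h1, h2, add_zero])
    · by_contra hd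
      have h1 : x.2.1.1 a = 0 := by by_contra h; exact hd (hx2 a (Or.inl h))
      have h2 : y.2.1.1 a = 0 := by by_contra h; exact hd (hy2 a (Or.inl h))
      have h3 : x.2.1.2 a = 0 := by by_contra h; exact hd (hx2 a (Or.inr h))
      have h4 : y.2.1.2 a = 0 := by by_contra h; exact hd (hy2 a (Or.inr h))
      rcases ha with ha | ha
      · exact ha (show x.2.1.1 a + y.2.1.1 a = 0 by rw [h1, h2, add_zero])
      · exact ha (show x.2.1.2 a + y.2.1.2 a = 0 by rw [h3, h4, add_zero])
    · by_contra hd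
      have h1 : x.2.2.1 a = 0 := by by_contra h; exact hd (hx3 a (Or.inl h))
      have h2 : y.2.2.1 a = 0 := by by_contra h; exact hd (hy3 a (Or.inl h))
      have h3 : x.2.2.2 a = 0 := by by_contra h; exact hd (hx3 a (Or.inr h))
      have h4 : y.2.2.2 a = 0 := by by_contra h; exact hd (hy3 a (Or.inr h))
      rcases ha with ha | ha
      · exact ha (show x.2.2.1 a + y.2.2.1 a = 0 by rw [h1, h2, add_zero])
      · exact ha (show x.2.2.2 a + y.2.2.2 a = 0 by rw [h3, h4, add_zero])
  smul_mem' := by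
    rintro c x ⟨hx1, hx2, hx3⟩
    refine ⟨fun a ha => ?_, fun a ha => ?_, fun a ha => ?_⟩
    · refine hx1 a fun h => ha (show c * x.1 a = 0 by rw [h, mul_zero])
    · refine hx2 a ?_
      rcases ha with ha | ha
      · exact Or.inl fun h => ha (show c * x.2.1.1 a = 0 by rw [h, mul_zero])
      · exact Or.inr fun h => ha (show c * x.2.1.2 a = 0 by rw [h, mul_zero])
    · refine hx3 a ?_
      rcases ha with ha | ha
      · exact Or.inl fun h => ha (show c * x.2.2.1 a = 0 by rw [h, mul_zero])
      · exact Or.inr fun h => ha (show c * x.2.2.2 a = 0 by rw [h, mul_zero])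

lemma X_ne_zero_iff (b a : Idx) : (X b : A F) a ≠ 0 → a = b := by
  intro h
  by_contra hab
  exact h (by simp [X, hab])

lemma Md_le_suppSub (d : ℤ) : (Md d : Submodule F (Mel F)) ≤ suppSub d := by
  rw [Md, Submodule.span_le]
  rintro m ((⟨b, rfl, hd⟩ | ⟨b, i, rfl, hd⟩) | ⟨b, i, rfl, hd⟩)
  · refine ⟨fun a ha => ?_, fun a ha => ?_, fun a ha => ?_⟩
    · have : a = b := X_ne_zero_iff b a ha
      rw [this] at *; exact hd
    · rcases ha with ha | ha <;> exact absurd rfl ha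
    · rcases ha with ha | ha <;> exact absurd rfl ha
  · refine ⟨fun a ha => absurd rfl ha, fun a ha => ?_, fun a ha => ?_⟩
    · have hab : a = b := by
        rcases ha with ha | ha <;>
        · by_cases hi : i = 0 <;> simp [ιW, wOf, hi] at ha <;>
            first
              | exact X_ne_zero_iff b a ha
              | exact absurd rfl ha
      rw [hab]; exact hd
    · rcases ha with ha | ha <;> exact absurd rfl ha
  · refine ⟨fun a ha => absurd rfl ha, fun a ha => ?_, fun a ha => ?_⟩
    · rcases ha with ha | ha <;> exact absurd rfl ha
    · have hab : a = b := by
        rcases ha with ha | ha <;>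
        · by_cases hi : i = 0 <;> simp [ιT, wOf, hi] at ha <;>
            first
              | exact X_ne_zero_iff b a ha
              | exact absurd rfl ha
      rw [hab]; exact hd

end Support
/-- If `E` is a weight vector of the Melikian algebra for the torus `T_M` with weight
`(φ₁, φ₂) ∈ 𝔽₅²`, and `E` is homogeneous of degree `d` for the `ℤ`-grading, then
`d ≡ 3(φ₁ + φ₂) mod 5`. -/
theorem melikian_weight_degree (F : Type*) [Field F] [CharP F 5] :
    ∀ (φ : ZMod 5 × ZMod 5) (d : ℤ) (E : Mel F), E ≠ 0 → E ∈ Md d →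
      brM x1D1 E = zc F φ.1 • E → brM x2D2 E = zc F φ.2 • E →
      (d : ZMod 5) = 3 * (φ.1 + φ.2) := by
  have h5 : (5 : ZMod 5) = 0 := by decide
  haveI : Fact (Nat.Prime 5) := ⟨by norm_num⟩
  intro φ d E hE hMd h1 h2
  obtain ⟨hsA, hsW, hsT⟩ := Md_le_suppSub d hMd
  have hinj : Function.Injective (zc F) := (zc F).injective
  have key : ∀ (c v : F) (φp : ZMod 5) (n : ℕ) (k : ℤ), v ≠ 0 → c * v = zc F φp * v →
      c = (n : F) + (k : F) → φp = (n : ZMod 5) + (k : ZMod 5) := by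
    intro c v φp n k hv heq hc
    apply hinj
    rw [map_add, map_natCast, map_intCast, ← hc]
    exact (mul_right_cancel₀ hv heq).symm
  have hcases : (∃ a, E.1 a ≠ 0) ∨ (∃ a, E.2.1.1 a ≠ 0) ∨ (∃ a, E.2.1.2 a ≠ 0)
      ∨ (∃ a, E.2.2.1 a ≠ 0) ∨ (∃ a, E.2.2.2 a ≠ 0) := by
    by_contra h
    push_neg at h
    obtain ⟨u1, u2, u3, u4, u5⟩ := h
    exact hE (Prod.ext (funext u1) (Prod.ext (Prod.ext (funext u2) (funext u3))
      (Prod.ext (funext u4) (funext u5))))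
  rcases hcases with ⟨a, ha⟩ | ⟨a, ha⟩ | ⟨a, ha⟩ | ⟨a, ha⟩ | ⟨a, ha⟩
  · -- A component
    have hd : d = 3 * degA a - 2 := hsA a ha
    have t1 := congrFun (congrArg (fun z : Mel F => z.1) h1) a
    have t2 := congrFun (congrArg (fun z : Mel F => z.1) h2) a
    rw [brM_x1D1_1] at t1
    rw [brM_x2D2_1] at t2
    have p1 : φ.1 = (a.1.val : ZMod 5) + ((-2 : ℤ) : ZMod 5) :=
      key _ _ _ _ _ ha t1 (by push_cast; ring)
    have p2 : φ.2 = (a.2.val : ZMod 5) + ((-2 : ℤ) : ZMod 5) :=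
      key _ _ _ _ _ ha t2 (by push_cast; ring)
    rw [hd, p1, p2]
    simp only [degA]
    push_cast
    linear_combination (2 : ZMod 5) * h5
  · -- W, D₁ component
    have hd : d = 3 * (degA a - 1) := hsW a (Or.inl ha)
    have t1 := congrFun (congrArg (fun z : Mel F => z.2.1.1) h1) a
    have t2 := congrFun (congrArg (fun z : Mel F => z.2.1.1) h2) a
    rw [brM_x1D1_21] at t1
    rw [brM_x2D2_21] at t2
    have p1 : φ.1 = (a.1.val : ZMod 5) + ((-1 : ℤ) : ZMod 5) :=
      key _ _ _ _ _ ha t1 (by push_cast; ring)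
    have p2 : φ.2 = (a.2.val : ZMod 5) + ((0 : ℤ) : ZMod 5) :=
      key _ _ _ _ _ ha t2 (by push_cast; ring)
    rw [hd, p1, p2]
    simp only [degA]
    push_cast
    ring
  · -- W, D₂ component
    have hd : d = 3 * (degA a - 1) := hsW a (Or.inr ha)
    have t1 := congrFun (congrArg (fun z : Mel F => z.2.1.2) h1) a
    have t2 := congrFun (congrArg (fun z : Mel F => z.2.1.2) h2) a
    rw [brM_x1D1_22] at t1
    rw [brM_x2D2_22] at t2
    have p1 : φ.1 = (a.1.val : ZMod 5) + ((0 : ℤ) : ZMod 5) :=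
      key _ _ _ _ _ ha t1 (by push_cast; ring)
    have p2 : φ.2 = (a.2.val : ZMod 5) + ((-1 : ℤ) : ZMod 5) :=
      key _ _ _ _ _ ha t2 (by push_cast; ring)
    rw [hd, p1, p2]
    simp only [degA]
    push_cast
    ring
  · -- W~, D̃₁ component
    have hd : d = 3 * (degA a - 1) + 2 := hsT a (Or.inl ha)
    have t1 := congrFun (congrArg (fun z : Mel F => z.2.2.1) h1) a
    have t2 := congrFun (congrArg (fun z : Mel F => z.2.2.1) h2) a
    rw [brM_x1D1_31] at t1
    rw [brM_x2D2_31] at t2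
    have p1 : φ.1 = (a.1.val : ZMod 5) + ((1 : ℤ) : ZMod 5) :=
      key _ _ _ _ _ ha t1 (by push_cast; ring)
    have p2 : φ.2 = (a.2.val : ZMod 5) + ((2 : ℤ) : ZMod 5) :=
      key _ _ _ _ _ ha t2 (by push_cast; ring)
    rw [hd, p1, p2]
    simp only [degA]
    push_cast
    linear_combination (-2 : ZMod 5) * h5
  · -- W~, D̃₂ component
    have hd : d = 3 * (degA a - 1) + 2 := hsT a (Or.inr ha)
    have t1 := congrFun (congrArg (fun z : Mel F => z.2.2.2) h1) a
    have t2 := congrFun (congrArg (fun z : Mel F => z.2.2.2) h2) a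
    rw [brM_x1D1_32] at t1
    rw [brM_x2D2_32] at t2
    have p1 : φ.1 = (a.1.val : ZMod 5) + ((2 : ℤ) : ZMod 5) :=
      key _ _ _ _ _ ha t1 (by push_cast; ring)
    have p2 : φ.2 = (a.2.val : ZMod 5) + ((1 : ℤ) : ZMod 5) :=
      key _ _ _ _ _ ha t2 (by push_cast; ring)
    rw [hd, p1, p2]
    simp only [degA]
    push_cast
    linear_combination (-2 : ZMod 5) * h5

end Melikian
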